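/- The iteration w^{k+1} = (I − M^s G(w^k))^{-1} w^0 reaches its limit after at most n − d₀ steps, where d₀ = |{i : w^0_i ≥ 0}|; i.e., the sets P(w^k) = {i : w^k_i ≥ 0} are non-decreasing in k and stabilize after at most n − d₀ iterations. -/

import Mathlib

/-!
For `B = Ms * G(v)`, again substochastic with the Elsinger property, `1 - B` is inverse-positive:
if `(1 - B) y ≥ 0`, the negative part `z` of `y` satisfies `z ≤ B z`; summing over the support `J`
of `z` shows that every column in `J` has all its mass inside `J`, which the Elsinger property
forbids unless `z = 0`. This makes `1 - B` invertible and gives a comparison principle, and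
comparing `(1 - B_k) w^k` with `w^0 = (1 - B_k) w^{k+1}` yields `w^k ≤ w^{k+1}` by induction on `k`.
So the sets `P(w^k)` grow; once two consecutive ones agree, so do the matrices `G(w^k)` and the
iteration is constant from then on. Hence strict growth lasts at most `n - d₀` steps.
-/

open Matrix Finset Filter Topology

/-- A left substochastic matrix: nonnegative entries, column sums at most 1. -/
def Substoch {n : ℕ} (M : Matrix (Fin n) (Fin n) ℝ) : Prop :=
  (∀ i j, 0 ≤ M i j) ∧ ∀ j, ∑ i, M i j ≤ 1

/-- The Elsinger Property: no nonempty subset `J` of indices with all column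
sums over `J` (for columns in `J`) equal to 1. -/
def Elsinger {n : ℕ} (M : Matrix (Fin n) (Fin n) ℝ) : Prop :=
  ∀ J : Finset (Fin n), J.Nonempty → ¬ (∀ j ∈ J, ∑ i ∈ J, M i j = 1)

/-- `G(w) = diag(w ≥ 0)`: the 0-1 diagonal matrix indicating nonnegative entries. -/
noncomputable def Gmat {n : ℕ} (w : Fin n → ℝ) : Matrix (Fin n) (Fin n) ℝ :=
  Matrix.diagonal fun i => if 0 ≤ w i then 1 else 0

lemma Matrix.mulVec_mono_of_nonneg {m ι R : Type*} [Fintype ι] [Semiring R] [PartialOrder R]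
    [IsOrderedRing R] {M : Matrix m ι R} (hM : ∀ i j, 0 ≤ M i j) : Monotone M.mulVec :=
  fun _ _ h i => dotProduct_le_dotProduct_of_nonneg_left h (hM i)

variable {n : ℕ}

section Gmat

lemma Gmat_mulVec_apply (v x : Fin n → ℝ) (i : Fin n) :
    (Gmat v *ᵥ x) i = if 0 ≤ v i then x i else 0 := by
  simp [Gmat, mulVec_diagonal]

lemma Gmat_mulVec_self_nonneg (v : Fin n → ℝ) : 0 ≤ Gmat v *ᵥ v := fun i => by
  rw [Gmat_mulVec_apply]
  split_ifs with h
  exacts [h, le_rfl]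

lemma Gmat_mulVec_le_of_le {v v' : Fin n → ℝ} (h : v ≤ v') :
    Gmat v *ᵥ v' ≤ Gmat v' *ᵥ v' := fun i => by
  simp only [Gmat_mulVec_apply]
  split_ifs with h₁ h₂ h₂
  · exact le_rfl
  · exact absurd (h₁.trans (h i)) h₂
  · exact h₂
  · exact le_rfl

lemma Gmat_congr {v v' : Fin n → ℝ} (h : {i | 0 ≤ v i} = {i | 0 ≤ v' i}) : Gmat v = Gmat v' := by
  have hiff : ∀ i, 0 ≤ v i ↔ 0 ≤ v' i := Set.ext_iff.1 h
  simp only [Gmat, hiff]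

lemma one_sub_mul_Gmat_mulVec (M : Matrix (Fin n) (Fin n) ℝ) (v x : Fin n → ℝ) :
    (1 - M * Gmat v) *ᵥ x = x - M *ᵥ (Gmat v *ᵥ x) := by
  rw [sub_mulVec, one_mulVec, mulVec_mulVec]

end Gmat

section Elsinger

variable {M B : Matrix (Fin n) (Fin n) ℝ}

lemma Substoch.sum_le_one (hM : Substoch M) (J : Finset (Fin n)) (j : Fin n) :
    ∑ i ∈ J, M i j ≤ 1 :=
  (sum_le_sum_of_subset_of_nonneg (subset_univ J) fun i _ _ => hM.1 i j).trans (hM.2 j)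

lemma Substoch.mul_diagonal (hM : Substoch M) {g : Fin n → ℝ} (hg₀ : 0 ≤ g) (hg₁ : g ≤ 1) :
    Substoch (M * diagonal g) := by
  refine ⟨fun i j => ?_, fun j => ?_⟩
  · rw [Matrix.mul_diagonal]
    exact mul_nonneg (hM.1 i j) (hg₀ j)
  · simp only [Matrix.mul_diagonal, ← sum_mul]
    simpa using mul_le_mul (hM.2 j) (hg₁ j) (hg₀ j) zero_le_one

lemma Elsinger.mul_diagonal (hM : Substoch M) (hE : Elsinger M) {g : Fin n → ℝ} (hg : g ≤ 1) :
    Elsinger (M * diagonal g) := by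
  refine fun J hJ hsum => hE J hJ fun j hj => ?_
  have h := hsum j hj
  simp only [Matrix.mul_diagonal, ← sum_mul] at h
  have hnn : 0 ≤ ∑ i ∈ J, M i j := sum_nonneg fun i _ => hM.1 i j
  exact le_antisymm (hM.sum_le_one J j) (h ▸ mul_le_of_le_one_right hnn (hg j))

lemma Elsinger.eq_zero_of_le_mulVec (hB : Substoch B) (hE : Elsinger B) {z : Fin n → ℝ}
    (hz : 0 ≤ z) (hzB : z ≤ B *ᵥ z) : z = 0 := by
  classical
  set J := univ.filter fun j => z j ≠ 0
  have hBz : ∀ i, (B *ᵥ z) i = ∑ j ∈ J, B i j * z j := fun i =>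
    (sum_filter_of_ne (s := univ) (f := fun j => B i j * z j) fun _ _ h =>
      right_ne_zero_of_mul h).symm
  have hloss : ∀ j ∈ J, 0 ≤ z j * (1 - ∑ i ∈ J, B i j) := fun j _ =>
    mul_nonneg (hz j) (sub_nonneg.2 (hB.sum_le_one J j))
  have hmass : ∑ j ∈ J, z j * (1 - ∑ i ∈ J, B i j) = 0 := by
    refine le_antisymm ?_ (sum_nonneg hloss)
    calc ∑ j ∈ J, z j * (1 - ∑ i ∈ J, B i j) = ∑ j ∈ J, z j - ∑ i ∈ J, (B *ᵥ z) i := by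
          simp only [hBz, mul_sub, mul_one, sum_sub_distrib, mul_sum]
          rw [sum_comm]
          simp only [mul_comm]
      _ ≤ 0 := sub_nonpos.2 (sum_le_sum fun i _ => hzB i)
  by_contra hne
  have hJ : J.Nonempty := by
    obtain ⟨j, hj⟩ := Function.ne_iff.1 hne
    exact ⟨j, mem_filter.2 ⟨mem_univ j, hj⟩⟩
  refine hE J hJ fun j hj => ?_
  have h := (sum_eq_zero_iff_of_nonneg hloss).1 hmass j hj
  rw [mul_eq_zero, sub_eq_zero] at h
  exact (h.resolve_left (mem_filter.1 hj).2).symm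

lemma Elsinger.nonneg_of_one_sub_mulVec_nonneg (hB : Substoch B) (hE : Elsinger B)
    {y : Fin n → ℝ} (hy : 0 ≤ (1 - B) *ᵥ y) : 0 ≤ y := by
  have hmono := mulVec_mono_of_nonneg hB.1
  have hneg : -y ≤ B *ᵥ (-y) := by
    rw [sub_mulVec, one_mulVec] at hy
    rw [mulVec_neg]
    exact neg_le_neg (sub_nonneg.1 hy)
  have hyB : y⁻ ≤ B *ᵥ y⁻ := by
    refine sup_le (hneg.trans (hmono (neg_le_negPart y))) ?_
    simpa using hmono (negPart_nonneg y)
  exact negPart_eq_zero.1 (hE.eq_zero_of_le_mulVec hB (negPart_nonneg y) hyB)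

lemma Elsinger.le_of_one_sub_mulVec_le (hB : Substoch B) (hE : Elsinger B) {u x : Fin n → ℝ}
    (h : (1 - B) *ᵥ u ≤ (1 - B) *ᵥ x) : u ≤ x :=
  sub_nonneg.1 (hE.nonneg_of_one_sub_mulVec_nonneg hB (by rwa [mulVec_sub, sub_nonneg]))

lemma Elsinger.isUnit_det_one_sub (hB : Substoch B) (hE : Elsinger B) : IsUnit (1 - B).det := by
  rw [isUnit_iff_ne_zero, Ne, ← exists_mulVec_eq_zero_iff]
  rintro ⟨v, hv, hBv⟩
  refine hv (le_antisymm ?_ (hE.nonneg_of_one_sub_mulVec_nonneg hB hBv.ge))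
  exact neg_nonneg.1 (hE.nonneg_of_one_sub_mulVec_nonneg hB (by rw [mulVec_neg, hBv, neg_zero]))

lemma Substoch.mul_Gmat (hM : Substoch M) (v : Fin n → ℝ) :
    Substoch (M * Gmat v) :=
  hM.mul_diagonal (fun i => by dsimp only; split_ifs <;> norm_num)
    (fun i => by dsimp only; split_ifs <;> norm_num)

lemma Elsinger.mul_Gmat (hM : Substoch M) (hE : Elsinger M) (v : Fin n → ℝ) :
    Elsinger (M * Gmat v) :=
  hE.mul_diagonal hM fun i => by dsimp only; split_ifs <;> norm_num

end Elsinger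

lemma eq_succ_of_eq_succ_of_le {α : Type*} {s : ℕ → α}
    (hstall : ∀ k, s k = s (k + 1) → s (k + 1) = s (k + 2)) {j m : ℕ} (hjm : j ≤ m)
    (hj : s j = s (j + 1)) : s m = s (m + 1) := by
  induction m, hjm using Nat.le_induction with
  | base => exact hj
  | succ m _ ih => exact hstall m ih

lemma Monotone.eq_of_stall_persists {α : Type*} [Finite α] {s : ℕ → Set α} (hs : Monotone s)
    (hstall : ∀ k, s k = s (k + 1) → s (k + 1) = s (k + 2)) {k : ℕ}
    (hk : Nat.card α - (s 0).ncard ≤ k) : s k = s (Nat.card α - (s 0).ncard) := by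
  set N := Nat.card α - (s 0).ncard
  have hN : s N = s (N + 1) := by
    by_contra hne
    have hgrow : ∀ j ≤ N + 1, (s 0).ncard + j ≤ (s j).ncard := by
      intro j
      induction j with
      | zero => simp
      | succ j ih =>
        intro hj
        have hlt : s j < s (j + 1) := (hs (Nat.le_add_right j 1)).lt_of_ne fun h =>
          hne (eq_succ_of_eq_succ_of_le hstall (by omega) h)
        have := Set.ncard_lt_ncard hlt
        have := ih (by omega)
        omega
    have := hgrow (N + 1) le_rfl
    have := Set.ncard_le_card (s (N + 1))
    have := Set.ncard_le_card (s 0)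
    omega
  induction k, hk using Nat.le_induction with
  | base => rfl
  | succ m hm ih => exact (eq_succ_of_eq_succ_of_le hstall hm hN).symm.trans ih

section Iteration

variable {Ms : Matrix (Fin n) (Fin n) ℝ} {w : ℕ → Fin n → ℝ}
  (hwk : ∀ k, w (k + 1) = (1 - Ms * Gmat (w k))⁻¹ *ᵥ w 0)
include hwk

lemma iterate_succ_succ_of_nonneg_set_eq {k : ℕ} (h : {i | 0 ≤ w k i} = {i | 0 ≤ w (k + 1) i}) :
    w (k + 1) = w (k + 2) := by
  rw [hwk (k + 1), ← Gmat_congr h, ← hwk k]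

variable (hMs : Substoch Ms) (hMsE : Elsinger Ms)
include hMs hMsE

lemma one_sub_mul_Gmat_mulVec_iterate_succ (k : ℕ) :
    (1 - Ms * Gmat (w k)) *ᵥ w (k + 1) = w 0 := by
  rw [hwk, mulVec_mulVec, mul_nonsing_inv _ ((hMsE.mul_Gmat hMs _).isUnit_det_one_sub
    (hMs.mul_Gmat _)), one_mulVec]

lemma iterate_le_succ (k : ℕ) : w k ≤ w (k + 1) := by
  have hmono := mulVec_mono_of_nonneg hMs.1
  have hiter := one_sub_mul_Gmat_mulVec_iterate_succ hwk hMs hMsE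
  induction k with
  | zero =>
    refine (hMsE.mul_Gmat hMs (w 0)).le_of_one_sub_mulVec_le (hMs.mul_Gmat _) ?_
    rw [hiter, one_sub_mul_Gmat_mulVec]
    exact sub_le_self _ (by simpa using hmono (Gmat_mulVec_self_nonneg (w 0)))
  | succ k ih =>
    refine (hMsE.mul_Gmat hMs (w (k + 1))).le_of_one_sub_mulVec_le (hMs.mul_Gmat _) ?_
    rw [hiter (k + 1), ← hiter k, one_sub_mul_Gmat_mulVec, one_sub_mul_Gmat_mulVec]
    exact sub_le_sub_left (hmono (Gmat_mulVec_le_of_le ih)) _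

end Iteration

theorem equity_iteration_finite_general {n : ℕ}
    (Ms : Matrix (Fin n) (Fin n) ℝ)
    (hMs : Substoch Ms) (hMsE : Elsinger Ms)
    (w : ℕ → Fin n → ℝ)
    (hwk : ∀ k, w (k + 1) = (1 - Ms * Gmat (w k))⁻¹.mulVec (w 0)) :
    let d0 : ℕ := Nat.card {i : Fin n // 0 ≤ w 0 i}
    (∀ k, {i : Fin n | 0 ≤ w k i} ⊆ {i : Fin n | 0 ≤ w (k + 1) i}) ∧
    (∀ k, n - d0 ≤ k → {i : Fin n | 0 ≤ w k i} = {i : Fin n | 0 ≤ w (n - d0) i}) := by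
  intro d0
  have hmono : Monotone fun k => {i : Fin n | 0 ≤ w k i} :=
    monotone_nat_of_le_succ fun k i hi => hi.trans (iterate_le_succ hwk hMs hMsE k i)
  have hN : Nat.card (Fin n) - {i : Fin n | 0 ≤ w 0 i}.ncard = n - d0 := by
    rw [Nat.card_fin]
    rfl
  refine ⟨fun k => hmono k.le_succ, fun k hk => ?_⟩
  rw [← hN] at hk ⊢
  exact hmono.eq_of_stall_persists
    (fun k h => congrArg (fun v => {i | 0 ≤ v i}) (iterate_succ_succ_of_nonneg_set_eq hwk h)) hk

/-- The sign-pattern sets `P(w^k) = {i : w^k_i ≥ 0}` are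
non-decreasing in `k` and stabilize after at most `n − d₀` iterations, where
`d₀` is the number of nonnegative entries of `w^0`. -/
theorem equity_iteration_finite {n : ℕ} (a d rbar : Fin n → ℝ)
    (ha : ∀ i, 0 ≤ a i) (hd : ∀ i, 0 ≤ d i) (hrbar : ∀ i, 0 ≤ rbar i)
    (Md Ms : Matrix (Fin n) (Fin n) ℝ)
    (hMdnn : ∀ i j, 0 ≤ Md i j)
    (hMs : Substoch Ms) (hMsE : Elsinger Ms)
    (w : ℕ → Fin n → ℝ)
    (hw0 : w 0 = fun i => a i + Md.mulVec rbar i - d i)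
    (hwk : ∀ k, w (k + 1) = (1 - Ms * Gmat (w k))⁻¹.mulVec (w 0)) :
    let d0 : ℕ := Nat.card {i : Fin n // 0 ≤ w 0 i}
    (∀ k, {i : Fin n | 0 ≤ w k i} ⊆ {i : Fin n | 0 ≤ w (k + 1) i}) ∧
    (∀ k, n - d0 ≤ k → {i : Fin n | 0 ≤ w k i} = {i : Fin n | 0 ≤ w (n - d0) i}) :=
  equity_iteration_finite_general Ms hMs hMsE w hwk
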